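/- arXiv:2209.04711 — 3 statements merged into one kernel-verified Lean document; each statement's English description precedes it below -/
import Mathlib

section
/- In the automorphism group Aut(F), the following identities hold: L² = id, R² = id, τ² = id, σ² = id, (τ ∘ χ²)² = id, (L ∘ R)² = id, (L ∘ τ)⁴ = id, and (R ∘ τ)⁴ = id. -/
/-!
Let `F = ⟨a, b, t ∣ a² = b² = 1⟩ ≅ C₂ * C₂ * ℤ`, realized as a `PresentedGroup`.
-/

namespace ABZ

/-- Generators of the presentation `⟨a, b, t ∣ a² = b² = 1⟩`. -/
inductive Gen : Type
  | a | b | t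
  deriving DecidableEq

open Gen

/-- The relators `a²` and `b²`. -/
def rels : Set (FreeGroup Gen) := {FreeGroup.of a ^ 2, FreeGroup.of b ^ 2}

/-- The group `F = ⟨a, b, t ∣ a² = b² = 1⟩ ≅ C₂ * C₂ * ℤ`. -/
abbrev F : Type := PresentedGroup rels

/-- The generator `a` of `F`. -/
def ga : F := PresentedGroup.of a
/-- The generator `b` of `F`. -/
def gb : F := PresentedGroup.of b
/-- The generator `t` of `F`. -/
def gt : F := PresentedGroup.of t


lemma ha : ga * ga = 1 := by
  have : PresentedGroup.mk rels (FreeGroup.of a ^ 2) = 1 := by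
    apply (QuotientGroup.eq_one_iff _).2
    exact Subgroup.subset_normalClosure (Or.inl rfl)
  simpa [ga, PresentedGroup.of, PresentedGroup.mk, sq, map_mul] using this

lemma hb : gb * gb = 1 := by
  have : PresentedGroup.mk rels (FreeGroup.of b ^ 2) = 1 := by
    apply (QuotientGroup.eq_one_iff _).2
    exact Subgroup.subset_normalClosure (Or.inr rfl)
  simpa [gb, PresentedGroup.of, PresentedGroup.mk, sq, map_mul] using this

lemma aut_ext {φ ψ : MulAut F} (h1 : φ ga = ψ ga) (h2 : φ gb = ψ gb) (h3 : φ gt = ψ gt) :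
    φ = ψ := by
  have : (φ : F →* F) = ψ := by
    apply PresentedGroup.ext
    rintro (_|_|_) <;> assumption
  ext x
  exact DFunLike.congr_fun this x

lemma ha' (x : F) : ga * (ga * x) = x := by rw [← mul_assoc, ha, one_mul]
lemma hb' (x : F) : gb * (gb * x) = x := by rw [← mul_assoc, hb, one_mul]
lemma hia : ga⁻¹ = ga := inv_eq_of_mul_eq_one_right ha
lemma hib : gb⁻¹ = gb := inv_eq_of_mul_eq_one_right hb

/-- The inner automorphisms form a normal subgroup of `MulAut G`. -/
instance innNormal (G : Type*) [Group G] : ((MulAut.conj : G →* MulAut G).range).Normal := by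
  constructor
  rintro x ⟨g, rfl⟩ f
  refine ⟨f g, ?_⟩
  ext y
  simp [MulAut.conj_apply, mul_assoc, map_mul]

/-- The outer automorphism group `Out(G) = MulAut G ⧸ Inn(G)`. -/
abbrev Out (G : Type*) [Group G] : Type _ := MulAut G ⧸ (MulAut.conj : G →* MulAut G).range

/-- The outer class `[φ]` of an automorphism `φ`. -/
def out {G : Type*} [Group G] (φ : MulAut G) : Out G := QuotientGroup.mk φ

/-- `σ : a ↦ b, b ↦ a, t ↦ t`. -/
def IsSigma (σ : MulAut F) : Prop := σ ga = gb ∧ σ gb = ga ∧ σ gt = gt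
/-- `τ : a ↦ a, b ↦ b, t ↦ t⁻¹`. -/
def IsTau (τ : MulAut F) : Prop := τ ga = ga ∧ τ gb = gb ∧ τ gt = gt⁻¹
/-- `L : a ↦ a, b ↦ b, t ↦ a·t`. -/
def IsL (L : MulAut F) : Prop := L ga = ga ∧ L gb = gb ∧ L gt = ga * gt
/-- `R : a ↦ a, b ↦ b, t ↦ t·b`. -/
def IsR (R : MulAut F) : Prop := R ga = ga ∧ R gb = gb ∧ R gt = gt * gb
/-- `χ : a ↦ a, b ↦ t⁻¹·b·t, t ↦ t`. -/
def IsChi (χ : MulAut F) : Prop := χ ga = ga ∧ χ gb = gt⁻¹ * gb * gt ∧ χ gt = gt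

/-- In `Aut(F)`: `L² = R² = τ² = σ² = (τ∘χ²)² = (L∘R)² = (L∘τ)⁴ = (R∘τ)⁴ = id`. -/
theorem relations_in_aut (σ τ L R χ : MulAut F) (hσ : IsSigma σ) (hτ : IsTau τ)
    (hL : IsL L) (hR : IsR R) (hχ : IsChi χ) :
    L ^ 2 = 1 ∧ R ^ 2 = 1 ∧ τ ^ 2 = 1 ∧ σ ^ 2 = 1 ∧ (τ * χ ^ 2) ^ 2 = 1 ∧
      (L * R) ^ 2 = 1 ∧ (L * τ) ^ 4 = 1 ∧ (R * τ) ^ 4 = 1 := by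

  obtain ⟨hσ1, hσ2, hσ3⟩ := hσ
  obtain ⟨hτ1, hτ2, hτ3⟩ := hτ
  obtain ⟨hL1, hL2, hL3⟩ := hL
  obtain ⟨hR1, hR2, hR3⟩ := hR
  obtain ⟨hχ1, hχ2, hχ3⟩ := hχ
  refine ⟨?_, ?_, ?_, ?_, ?_, ?_, ?_, ?_⟩ <;>
    refine aut_ext ?_ ?_ ?_ <;>
    simp [pow_succ, MulAut.mul_apply, MulAut.one_apply, map_mul, map_inv, mul_assoc,
      hσ1, hσ2, hσ3, hτ1, hτ2, hτ3, hL1, hL2, hL3, hR1, hR2, hR3, hχ1, hχ2, hχ3,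
      ha', hb', hia, hib, ha, hb]


end ABZ
end

section
/- The composite automorphism σ ∘ χ ∘ σ ∘ χ of F equals the inner automorphism x ↦ t⁻¹·x·t (that is, it equals MulAut.conj t⁻¹); in particular its image in Out(F) is trivial, i.e., [σ]·[χ]·[σ]·[χ] = 1 in Out(F). -/
/-!
Let `F = ⟨a, b, t ∣ a² = b² = 1⟩ ≅ C₂ * C₂ * ℤ`, realized as a `PresentedGroup`.
-/

namespace ABZ

open Gen

/-- `σ ∘ χ ∘ σ ∘ χ` is the inner automorphism `x ↦ t⁻¹·x·t`; in particular
`[σ]·[χ]·[σ]·[χ] = 1` in `Out(F)`. -/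
theorem sigma_chi_sigma_chi_inner (σ χ : MulAut F) (hσ : IsSigma σ) (hχ : IsChi χ) :
    σ * χ * σ * χ = MulAut.conj gt⁻¹ ∧ out σ * out χ * out σ * out χ = 1 := by
  obtain ⟨ha, hb, ht⟩ := hσ
  obtain ⟨ha', hb', ht'⟩ := hχ
  have key : σ * χ * σ * χ = MulAut.conj gt⁻¹ := by
    ext1 x
    have : ((σ * χ * σ * χ : MulAut F) : F →* F) = ((MulAut.conj gt⁻¹ : MulAut F) : F →* F) := by
      apply PresentedGroup.ext
      intro g
      have e1 : (PresentedGroup.of Gen.a : F) = ga := rfl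
      have e2 : (PresentedGroup.of Gen.b : F) = gb := rfl
      have e3 : (PresentedGroup.of Gen.t : F) = gt := rfl
      cases g <;>
        simp only [MulAut.coe_mul, MonoidHom.coe_coe, Function.comp_apply, MulAut.conj_apply] <;>
        show (σ * χ * σ * χ) _ = _
      · show (σ * χ * σ * χ) ga = _
        simp only [MulAut.mul_apply, ha', ha, hb', map_mul, map_inv, ht, hb, e1, e2, e3]
        group
      · show (σ * χ * σ * χ) gb = _
        simp only [MulAut.mul_apply, hb', map_mul, map_inv, ht, hb, ht', ha', ha, e1, e2, e3]
        group
      · show (σ * χ * σ * χ) gt = _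
        simp only [MulAut.mul_apply, ht', ht, e1, e2, e3]
        group
    exact DFunLike.congr_fun this x
  refine ⟨key, ?_⟩
  have : out σ * out χ * out σ * out χ = out (σ * χ * σ * χ) := rfl
  rw [this, key]
  exact (QuotientGroup.eq_one_iff _).mpr ⟨gt⁻¹, rfl⟩

end ABZ
end

section
/- For any nontrivial finite groups A and B, the outer automorphism group Out(G) of the free product G = A * B * ℤ contains a subgroup isomorphic to ℤ × ℤ. -/
/-!
Let `A` and `B` be nontrivial finite groups and let `G = A * B * ℤ` be the free product of
`A`, `B` and an infinite cyclic group, realized as `Monoid.CoprodI` of the family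
`A`, `B`, `FreeGroup PUnit`.
-/

namespace ABZfree

universe u

/-- Index type for the three free factors of `G = A * B * ℤ`. -/
inductive Idx3 : Type
  | A | B | Z

/-- The family of groups `A`, `B` and the free group on one generator (`≅ ℤ`). -/
def fam (A B : Type u) : Idx3 → Type u
  | .A => A
  | .B => B
  | .Z => FreeGroup PUnit.{u + 1}

instance famGroup (A B : Type u) [Group A] [Group B] : ∀ i, Group (fam A B i)
  | .A => inferInstanceAs (Group A)
  | .B => inferInstanceAs (Group B)
  | .Z => inferInstanceAs (Group (FreeGroup PUnit.{u + 1}))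

/-- The free product `G = A * B * ℤ`. -/
abbrev G (A B : Type u) [Group A] [Group B] : Type u := Monoid.CoprodI (fam A B)

/-- The inner automorphisms form a normal subgroup of `MulAut H`. -/
instance innNormal (H : Type*) [Group H] : ((MulAut.conj : H →* MulAut H).range).Normal := by
  constructor
  rintro x ⟨g, rfl⟩ f
  refine ⟨f g, ?_⟩
  ext y
  simp [MulAut.conj_apply, mul_assoc, map_mul]

/-- The outer automorphism group `Out(H) = MulAut H ⧸ Inn(H)`. -/
abbrev Out (H : Type*) [Group H] : Type _ := MulAut H ⧸ (MulAut.conj : H →* MulAut H).range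

end ABZfree

/-
Fix `a ≠ 1` in `A` and `b ≠ 1` in `B`, put `c = a b`, and let `t` generate the `ℤ` factor. The
endomorphism of `G` fixing `A` and `B` and sending `t ↦ c ^ m * t * c ^ n` fixes `c`, so these
endomorphisms compose by adding `(m, n)` and give a homomorphism `ℤ × ℤ →* Aut G`. If one of them is
conjugation by `g`, then `g` conjugates the letters `a` and `b` to letters of the same factors;
reduced words force `g ∈ A ∩ B = 1`. Hence `c ^ m * t * c ^ n = t`, and as `c ^ m` (`m ≠ 0`) is a
reduced word beginning and ending in `A` or `B`, the left side is a reduced word longer than `t`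
unless `m = n = 0`.
-/

namespace Monoid.CoprodI

variable {ι : Type*} {M : ι → Type*} [∀ i, Group (M i)]

theorem Word.prod_injective : Function.Injective (Word.prod : Word M → CoprodI M) := by
  classical exact Word.equiv.symm.injective

namespace NeWord

theorem toList_eq_of_prod_eq {i j k l : ι} {w : NeWord M i j} {v : NeWord M k l}
    (h : w.prod = v.prod) : w.toList = v.toList :=
  congrArg Word.toList (Word.prod_injective h)

theorem prod_ne_one {i j : ι} (w : NeWord M i j) : w.prod ≠ 1 := fun h =>
  w.toList_ne_nil (congrArg Word.toList (Word.prod_injective (h.trans Word.prod_empty.symm)))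

theorem prod_ne_of {i j k : ι} (w : NeWord M i j) (hw : 2 ≤ w.toList.length) (x : M k) :
    w.prod ≠ of x := by
  intro h
  by_cases hx : x = 1
  · exact w.prod_ne_one (by rw [h, hx, map_one])
  · have := congrArg List.length (toList_eq_of_prod_eq (h.trans (prod_singleton x hx).symm))
    simp only [toList, List.length_singleton] at this
    omega

theorem one_le_length_toList {i j : ι} (w : NeWord M i j) : 1 ≤ w.toList.length :=
  List.length_pos_iff.mpr w.toList_ne_nil

theorem prod_eq_of_last_or_exists_prod_eq_mul_of_last {i j : ι} (w : NeWord M i j) :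
    (i = j ∧ w.prod = of w.last) ∨
      ∃ (k : ι) (u : NeWord M i k), k ≠ j ∧ w.prod = u.prod * of w.last := by
  induction w with
  | singleton x h => exact Or.inl ⟨rfl, prod_singleton x h⟩
  | @append i j k l w₁ hne w₂ _ ih₂ =>
    rcases ih₂ with ⟨rfl, h⟩ | ⟨k', u, hk', hu⟩
    · exact Or.inr ⟨j, w₁, hne, by simp [h]⟩
    · exact Or.inr ⟨k', append w₁ hne u, hk', by simp [hu, mul_assoc]⟩

theorem conj_prod_ne_of {i j k l : ι} (w : NeWord M i j) (hj : j ≠ k) {a : M k} (ha : a ≠ 1)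
    (a' : M l) : w.prod * of a * w.prod⁻¹ ≠ of a' := by
  let v := append (append w hj (singleton a ha)) hj.symm w.inv
  have hv : v.prod = w.prod * of a * w.prod⁻¹ := by simp [v, inv_prod]
  refine hv ▸ v.prod_ne_of ?_ a'
  have := w.inv.one_le_length_toList
  simp only [v, toList, List.length_append, List.length_singleton]
  omega

end NeWord

theorem eq_one_of_mem_range_of_mem_range {i j : ι} (hij : i ≠ j) {g : CoprodI M}
    (hi : g ∈ (of : M i →* CoprodI M).range) (hj : g ∈ (of : M j →* CoprodI M).range) :
    g = 1 := by
  classical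
  obtain ⟨x, rfl⟩ := hi
  obtain ⟨y, hxy⟩ := hj
  have hx : x = 1 := by
    simpa [lift_of, Pi.mulSingle_eq_of_ne hij.symm, eq_comm] using
      congrArg (lift (Pi.mulSingle i (MonoidHom.id (M i)))) hxy
  rw [hx, map_one]

theorem mem_range_of_of_conj_of_eq {i : ι} {g : CoprodI M} {a a' : M i} (ha : a ≠ 1)
    (h : g * of a * g⁻¹ = of a') : g ∈ (of : M i →* CoprodI M).range := by
  classical
  rcases eq_or_ne (Word.equiv g) Word.empty with hg | hg
  · exact ⟨1, by rw [map_one, ← Word.equiv.symm_apply_apply g, hg]; rfl⟩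
  obtain ⟨i', j, w, hw⟩ := NeWord.of_word _ hg
  have hwg : w.prod = g := by rw [NeWord.prod, hw]; exact Word.equiv.symm_apply_apply g
  subst hwg
  -- A last letter from `M i` is absorbed into `a`; conjugating by a word ending outside `M i`
  -- makes it longer.
  rcases eq_or_ne j i with rfl | hj
  · rcases w.prod_eq_of_last_or_exists_prod_eq_mul_of_last with ⟨-, hpr⟩ | ⟨k, u, hk, hu⟩
    · exact ⟨w.last, hpr.symm⟩
    · have ha₂ : w.last * a * w.last⁻¹ ≠ 1 := by simpa using ha
      refine absurd ?_ (u.conj_prod_ne_of hk ha₂ a')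
      rw [← h, hu]
      simp only [map_mul, map_inv, mul_inv_rev, mul_assoc]
  · exact absurd h (w.conj_prod_ne_of hj ha a')

section TwoLetters

variable {i j : ι} {a : M i} {b : M j}

theorem exists_neWord_prod_eq_pow_succ (hij : i ≠ j) (ha : a ≠ 1) (hb : b ≠ 1) (n : ℕ) :
    ∃ w : NeWord M i j, w.prod = (of a * of b) ^ (n + 1) := by
  induction n with
  | zero => exact ⟨.append (.singleton a ha) hij (.singleton b hb), by simp⟩
  | succ n ih =>
    obtain ⟨w, hw⟩ := ih
    exact ⟨.append w hij.symm (.append (.singleton a ha) hij (.singleton b hb)),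
      by simp [hw, pow_succ _ (n + 1)]⟩

theorem exists_neWord_prod_eq_zpow (hij : i ≠ j) (ha : a ≠ 1) (hb : b ≠ 1) {m : ℤ}
    (hm : m ≠ 0) :
    ∃ (k l : ι) (w : NeWord M k l), (k = i ∨ k = j) ∧ (l = i ∨ l = j) ∧
      w.prod = (of a * of b) ^ m := by
  obtain ⟨n, rfl | rfl⟩ := Int.eq_nat_or_neg m <;>
    obtain ⟨n, rfl⟩ := Nat.exists_eq_succ_of_ne_zero (by omega : n ≠ 0) <;>
    obtain ⟨w, hw⟩ := exists_neWord_prod_eq_pow_succ hij ha hb n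
  · exact ⟨i, j, w, .inl rfl, .inr rfl, by rw [hw]; norm_cast⟩
  · exact ⟨j, i, w.inv, .inr rfl, .inl rfl, by rw [NeWord.inv_prod, hw, zpow_neg]; norm_cast⟩

theorem of_mul_of_zpow_ne_one (hij : i ≠ j) (ha : a ≠ 1) (hb : b ≠ 1) {m : ℤ} (hm : m ≠ 0) :
    (of a * of b) ^ m ≠ 1 := by
  obtain ⟨k, l, w, -, -, hw⟩ := exists_neWord_prod_eq_zpow hij ha hb hm
  exact hw ▸ w.prod_ne_one

theorem eq_zero_of_zpow_mul_of_mul_zpow_eq (hij : i ≠ j) (ha : a ≠ 1) (hb : b ≠ 1) {k : ι}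
    (hik : i ≠ k) (hjk : j ≠ k) {z : M k} (hz : z ≠ 1) {m n : ℤ}
    (h : (of a * of b) ^ m * of z * (of a * of b) ^ n = of z) :
    m = 0 ∧ n = 0 := by
  by_cases hm : m = 0
  · subst hm
    refine ⟨rfl, not_not.mp fun hn => of_mul_of_zpow_ne_one hij ha hb hn ?_⟩
    simpa [mul_assoc] using h
  by_cases hn : n = 0
  · subst hn
    exact absurd (by simpa using h) (of_mul_of_zpow_ne_one hij ha hb hm)
  exfalso
  obtain ⟨_, l, u, -, hl, hu⟩ := exists_neWord_prod_eq_zpow hij ha hb hm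
  obtain ⟨k', _, v, hk', -, hv⟩ := exists_neWord_prod_eq_zpow hij ha hb hn
  have hlk : l ≠ k := by rcases hl with rfl | rfl <;> assumption
  have hkk' : k ≠ k' := by rcases hk' with rfl | rfl <;> symm <;> assumption
  let w := NeWord.append (.append u hlk (.singleton z hz)) hkk' v
  refine w.prod_ne_of ?_ z (by simpa [w, hu, hv] using h)
  have := u.one_le_length_toList
  have := v.one_le_length_toList
  simp only [w, NeWord.toList, List.length_append, List.length_singleton]
  omega

end TwoLetters

end Monoid.CoprodI

namespace ABZfree

open Monoid.CoprodI

variable {A B : Type u} [Group A] [Group B]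

def zGen : G A B := of (i := Idx3.Z) (FreeGroup.of PUnit.unit)

def mulAB (a : A) (b : B) : G A B := of (i := Idx3.A) a * of (i := Idx3.B) b

section Twist

variable (a : A) (b : B)

noncomputable def twist (p : ℤ × ℤ) : G A B →* G A B :=
  lift fun
    | .A => of
    | .B => of
    | .Z => FreeGroup.lift fun _ => mulAB a b ^ p.1 * zGen * mulAB a b ^ p.2

@[simp]
theorem twist_of_A (p : ℤ × ℤ) (x : fam A B Idx3.A) : twist a b p (of x) = of x :=
  lift_of _ _

@[simp]
theorem twist_of_B (p : ℤ × ℤ) (x : fam A B Idx3.B) : twist a b p (of x) = of x :=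
  lift_of _ _

@[simp]
theorem twist_zGen (p : ℤ × ℤ) :
    twist a b p zGen = mulAB a b ^ p.1 * zGen * mulAB a b ^ p.2 :=
  (lift_of _ _).trans (FreeGroup.lift_apply_of ..)

@[simp]
theorem twist_mulAB (p : ℤ × ℤ) : twist a b p (mulAB a b) = mulAB a b := by
  rw [mulAB, map_mul, twist_of_A a b p a, twist_of_B a b p b]

theorem twist_comp_twist (p q : ℤ × ℤ) :
    (twist a b p).comp (twist a b q) = twist a b (p + q) := by
  refine ext_hom _ _ fun
    | .A => by ext; simp
    | .B => by ext; simp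
    | .Z => FreeGroup.ext_hom _ _ fun _ => ?_
  change twist a b p (twist a b q zGen) = twist a b (p + q) zGen
  simp only [twist_zGen, map_mul, map_zpow, twist_mulAB]
  rw [Prod.fst_add, Prod.snd_add, add_comm p.1, zpow_add, zpow_add]
  simp only [mul_assoc]

theorem twist_zero : twist a b 0 = MonoidHom.id (G A B) := by
  refine ext_hom _ _ fun
    | .A => by ext; simp
    | .B => by ext; simp
    | .Z => FreeGroup.ext_hom _ _ fun _ => ?_
  change twist a b 0 zGen = zGen
  simp

noncomputable def twistHom : Multiplicative (ℤ × ℤ) →* MulAut (G A B) where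
  toFun p := (twist a b p.toAdd).toMulEquiv (twist a b (-p.toAdd))
    (by rw [twist_comp_twist, neg_add_cancel, twist_zero])
    (by rw [twist_comp_twist, add_neg_cancel, twist_zero])
  map_one' := MulEquiv.ext fun x => by simp [twist_zero]
  map_mul' p q := MulEquiv.ext fun x => (DFunLike.congr_fun (twist_comp_twist a b _ _) x).symm

variable {a b}

theorem twistHom_injective_out (ha : a ≠ 1) (hb : b ≠ 1) :
    Function.Injective
      ((QuotientGroup.mk' (MulAut.conj : G A B →* MulAut (G A B)).range).comp (twistHom a b)) := by
  rw [injective_iff_map_eq_one]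
  intro p hp
  obtain ⟨g, hgp⟩ : twistHom a b p ∈ (MulAut.conj : G A B →* MulAut (G A B)).range := by
    simpa using hp
  have hconj : ∀ x, g * x * g⁻¹ = twist a b p.toAdd x := fun x => DFunLike.congr_fun hgp x
  have hg : g = 1 := eq_one_of_mem_range_of_mem_range (i := Idx3.A) (j := Idx3.B) nofun
    (mem_range_of_of_conj_of_eq ha ((hconj _).trans (twist_of_A a b _ _)))
    (mem_range_of_of_conj_of_eq hb ((hconj _).trans (twist_of_B a b _ _)))
  have htwist : twist a b p.toAdd zGen = zGen := by simpa [hg] using (hconj zGen).symm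
  rw [twist_zGen] at htwist
  obtain ⟨h₁, h₂⟩ := eq_zero_of_zpow_mul_of_mul_zpow_eq (M := fam A B) (i := .A) (j := .B)
    (k := .Z) nofun ha hb nofun nofun (FreeGroup.of_ne_one PUnit.unit) htwist
  exact Prod.ext h₁ h₂

end Twist

theorem out_contains_Z_times_Z_general (A B : Type u) [Group A] [Group B]
    [Nontrivial A] [Nontrivial B] :
    ∃ H : Subgroup (Out (G A B)), Nonempty (H ≃* Multiplicative (ℤ × ℤ)) := by
  obtain ⟨a, ha⟩ := exists_ne (1 : A)
  obtain ⟨b, hb⟩ := exists_ne (1 : B)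
  exact ⟨_, ⟨(MonoidHom.ofInjective (twistHom_injective_out ha hb)).symm⟩⟩

/-- For nontrivial finite groups `A`, `B` and `G = A * B * ℤ`, the group `Out(G)`
contains a subgroup isomorphic to `ℤ × ℤ`. -/
theorem out_contains_Z_times_Z (A B : Type u) [Group A] [Group B] [Finite A] [Finite B]
    [Nontrivial A] [Nontrivial B] :
    ∃ H : Subgroup (Out (G A B)), Nonempty (H ≃* Multiplicative (ℤ × ℤ)) :=
  out_contains_Z_times_Z_general A B

end ABZfree
end
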